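/- (Remainder bound in dimension 2) Fix κ ≥ 0 and θ₀ ∈ [−π, π]. Let f_vM(θ | κ) = e^{κ cos θ}/(2π I₀(κ)) with I₀(κ) = (1/2π)∫₀^{2π} e^{κ cos θ} dθ, let R₀(θ) = f_vM(θ | κ) − f_vM(θ₀ | κ), and set M = κ e^{κ}/I₀(κ). Let β_1 ≤ … ≤ β_n be the order statistics of n i.i.d. uniform random variables on [0, 2π]. Then E[∫_{θ₀ + (β_n − 2π)/2}^{θ₀ + β_1/2} |R₀(θ)| dθ] ≤ M π² / ((n+1)(n+2)); in particular this expectation is O(1/n²) as n → ∞. -/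

import Mathlib

open MeasureTheory Filter Asymptotics
open scoped ENNReal NNReal Topology

noncomputable section

/-- The modified Bessel function of the first kind at order `0`:
`I₀(κ) = (1/2π) ∫₀^{2π} e^{κ cos θ} dθ`. -/
def besselI0 (κ : ℝ) : ℝ :=
  (2 * Real.pi)⁻¹ * ∫ θ in (0:ℝ)..(2 * Real.pi), Real.exp (κ * Real.cos θ)

/-- The von Mises density `f_vM(θ | κ) = e^{κ cos θ} / (2π I₀(κ))`. -/
def fvM (κ θ : ℝ) : ℝ := Real.exp (κ * Real.cos θ) / (2 * Real.pi * besselI0 κ)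

instance : IsFiniteMeasure ((volume : Measure ℝ).restrict (Set.Icc (0:ℝ) (2 * Real.pi))) := by
  constructor
  rw [Measure.restrict_apply_univ]
  exact isCompact_Icc.measure_lt_top

/-- The uniform distribution on `[0, 2π]`. -/
def unifAngle : Measure ℝ :=
  ((Real.toNNReal (2 * Real.pi))⁻¹ : ℝ≥0) • (volume : Measure ℝ).restrict (Set.Icc (0:ℝ) (2 * Real.pi))

instance : IsFiniteMeasure unifAngle := by
  rw [unifAngle]; infer_instance

/-- `E[∫_{θ₀ + (β_n − 2π)/2}^{θ₀ + β_1/2} |R₀(θ)| dθ]`, where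
`R₀(θ) = f_vM(θ | κ) − f_vM(θ₀ | κ)` and `β_1 = min_i u_i`, `β_n = max_i u_i` are the
extreme order statistics of `n` i.i.d. uniform random variables on `[0, 2π]`. -/
def remainderInt (κ θ₀ : ℝ) (n : ℕ) : ℝ :=
  ∫ u : Fin n → ℝ,
    (∫ θ in (θ₀ + ((⨆ i, u i) - 2 * Real.pi) / 2)..(θ₀ + (⨅ i, u i) / 2),
      |fvM κ θ - fvM κ θ₀|)
    ∂ Measure.pi fun _ : Fin n => unifAngle

/- ### Auxiliary lemmas -/

lemma two_pi_pos : (0:ℝ) < 2 * Real.pi := by positivity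

lemma besselI0_pos (κ : ℝ) : 0 < besselI0 κ := by
  have h : 0 < ∫ θ in (0:ℝ)..(2 * Real.pi), Real.exp (κ * Real.cos θ) := by
    apply intervalIntegral.intervalIntegral_pos_of_pos
    · exact (Real.continuous_exp.comp
        (continuous_const.mul Real.continuous_cos)).intervalIntegrable _ _
    · intro x; exact Real.exp_pos _
    · exact two_pi_pos
  have := two_pi_pos
  unfold besselI0
  positivity

lemma denom_pos (κ : ℝ) : 0 < 2 * Real.pi * besselI0 κ :=
  mul_pos two_pi_pos (besselI0_pos κ)

lemma fvM_continuous (κ : ℝ) : Continuous (fvM κ) := by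
  unfold fvM
  exact (Real.continuous_exp.comp (continuous_const.mul Real.continuous_cos)).div_const _

lemma fvM_nonneg (κ θ : ℝ) : 0 ≤ fvM κ θ :=
  div_nonneg (Real.exp_pos _).le (denom_pos κ).le

lemma fvM_le {κ : ℝ} (hκ : 0 ≤ κ) (θ : ℝ) :
    fvM κ θ ≤ Real.exp κ / (2 * Real.pi * besselI0 κ) := by
  unfold fvM
  gcongr
  · exact (denom_pos κ).le
  · nlinarith [Real.cos_le_one θ]

lemma abs_fvM_sub_le {κ : ℝ} (hκ : 0 ≤ κ) (θ θ₀ : ℝ) :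
    |fvM κ θ - fvM κ θ₀| ≤ Real.exp κ / Real.pi / besselI0 κ := by
  have h1 := fvM_le hκ θ
  have h2 := fvM_le hκ θ₀
  have h3 := fvM_nonneg κ θ
  have h4 := fvM_nonneg κ θ₀
  have hd := denom_pos κ
  have hb := besselI0_pos κ
  have hp := Real.pi_pos
  have key : Real.exp κ / Real.pi / besselI0 κ
      = 2 * (Real.exp κ / (2 * Real.pi * besselI0 κ)) := by
    field_simp
  calc |fvM κ θ - fvM κ θ₀| ≤ |fvM κ θ| + |fvM κ θ₀| := abs_sub _ _
    _ = fvM κ θ + fvM κ θ₀ := by rw [abs_of_nonneg h3, abs_of_nonneg h4]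
    _ ≤ Real.exp κ / Real.pi / besselI0 κ := by rw [key]; linarith

lemma fvM_lipschitz {κ : ℝ} (hκ : 0 ≤ κ) (x y : ℝ) :
    |fvM κ x - fvM κ y| ≤ κ * Real.exp κ / (2 * Real.pi * besselI0 κ) * |x - y| := by
  set C := 2 * Real.pi * besselI0 κ with hC
  have hCpos := denom_pos κ
  have hderiv : ∀ t : ℝ, HasDerivAt (fvM κ)
      (Real.exp (κ * Real.cos t) * (κ * -Real.sin t) / C) t := by
    intro t
    have h1 : HasDerivAt (fun s : ℝ => κ * Real.cos s) (κ * -Real.sin t) t :=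
      (Real.hasDerivAt_cos t).const_mul κ
    exact (h1.exp).div_const C
  have hbound : ∀ t : ℝ, ‖Real.exp (κ * Real.cos t) * (κ * -Real.sin t) / C‖
      ≤ κ * Real.exp κ / C := by
    intro t
    rw [Real.norm_eq_abs, abs_div, abs_of_pos hCpos, div_le_div_iff_of_pos_right hCpos,
      abs_mul, abs_mul, abs_neg, abs_of_pos (Real.exp_pos _), abs_of_nonneg hκ]
    have : Real.exp (κ * Real.cos t) ≤ Real.exp κ := by
      rw [Real.exp_le_exp]; nlinarith [Real.cos_le_one t]
    have hs := Real.abs_sin_le_one t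
    nlinarith [mul_le_mul_of_nonneg_left hs (mul_nonneg (Real.exp_pos (κ * Real.cos t)).le hκ),
      mul_le_mul_of_nonneg_right this hκ, Real.exp_pos (κ * Real.cos t)]
  have := Convex.norm_image_sub_le_of_norm_hasDerivWithin_le
    (fun t _ => (hderiv t).hasDerivWithinAt) (fun t _ => hbound t) convex_univ
    (Set.mem_univ y) (Set.mem_univ x)
  simpa [Real.norm_eq_abs] using this

/- ### The uniform measure -/

lemma unifAngle_apply {A : Set ℝ} (hA : MeasurableSet A) :
    unifAngle A = ENNReal.ofReal (2 * Real.pi)⁻¹ * volume (A ∩ Set.Icc 0 (2 * Real.pi)) := by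
  rw [unifAngle, Measure.smul_apply, Measure.restrict_apply hA]
  rw [ENNReal.smul_def, smul_eq_mul]
  congr 1
  rw [ENNReal.ofReal, Real.toNNReal_inv,
    ENNReal.coe_inv (by simp [Real.toNNReal_eq_zero, two_pi_pos.not_ge, Real.pi_pos])]

instance : IsProbabilityMeasure unifAngle := by
  constructor
  rw [unifAngle_apply MeasurableSet.univ, Set.univ_inter, Real.volume_Icc]
  rw [← ENNReal.ofReal_mul (by positivity)]
  rw [sub_zero, inv_mul_cancel₀ two_pi_pos.ne']
  simp

lemma unif_Ioi {s : ℝ} (hs : s ∈ Set.Ioc 0 (2 * Real.pi)) :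
    unifAngle (Set.Ioi s) = ENNReal.ofReal ((2 * Real.pi - s) / (2 * Real.pi)) := by
  rw [unifAngle_apply measurableSet_Ioi]
  have h1 : Set.Ioi s ∩ Set.Icc 0 (2 * Real.pi) = Set.Ioc s (2 * Real.pi) := by
    ext x
    simp only [Set.mem_inter_iff, Set.mem_Ioi, Set.mem_Icc, Set.mem_Ioc]
    constructor
    · rintro ⟨h, _, h2⟩; exact ⟨h, h2⟩
    · rintro ⟨h, h2⟩; exact ⟨h, le_of_lt (hs.1.trans h), h2⟩
  rw [h1, Real.volume_Ioc, ← ENNReal.ofReal_mul (by positivity), div_eq_inv_mul]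

lemma unif_Iio {s : ℝ} (hs : s ∈ Set.Ioc 0 (2 * Real.pi)) :
    unifAngle (Set.Iio (2 * Real.pi - s)) = ENNReal.ofReal ((2 * Real.pi - s) / (2 * Real.pi)) := by
  rw [unifAngle_apply measurableSet_Iio]
  have h1 : Set.Iio (2 * Real.pi - s) ∩ Set.Icc 0 (2 * Real.pi)
      = Set.Ico 0 (2 * Real.pi - s) := by
    ext x
    simp only [Set.mem_inter_iff, Set.mem_Iio, Set.mem_Icc, Set.mem_Ico]
    constructor
    · rintro ⟨h, h2, _⟩; exact ⟨h2, h⟩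
    · rintro ⟨h2, h⟩; exact ⟨h, h2, h.le.trans (by linarith [hs.1])⟩
  rw [h1, Real.volume_Ico, ← ENNReal.ofReal_mul (by positivity), div_eq_inv_mul, sub_zero]

/-- The joint law of `n` i.i.d. uniforms on `[0, 2π]`. -/
def Pn (n : ℕ) : Measure (Fin n → ℝ) := Measure.pi fun _ => unifAngle

instance (n : ℕ) : IsProbabilityMeasure (Pn n) := by
  rw [Pn]; infer_instance

lemma unif_compl_Icc : unifAngle (Set.Icc (0:ℝ) (2 * Real.pi))ᶜ = 0 := by
  rw [unifAngle_apply measurableSet_Icc.compl, Set.compl_inter_self, measure_empty, mul_zero]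

lemma ae_mem_Icc (n : ℕ) :
    ∀ᵐ u ∂(Pn n), ∀ i, u i ∈ Set.Icc (0:ℝ) (2 * Real.pi) := by
  rw [ae_all_iff]
  intro i
  rw [ae_iff]
  have hsub : {u : Fin n → ℝ | ¬ u i ∈ Set.Icc (0:ℝ) (2 * Real.pi)}
      ⊆ Set.pi Set.univ (fun j => if j = i then (Set.Icc (0:ℝ) (2 * Real.pi))ᶜ else Set.univ) := by
    intro u hu
    intro j _
    by_cases h : j = i
    · subst h; simp only [if_pos rfl]; exact hu
    · simp [h]
  refine measure_mono_null hsub ?_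
  rw [Pn, Measure.pi_pi]
  apply Finset.prod_eq_zero (Finset.mem_univ i)
  simp [unif_compl_Icc]

/- ### Elementary integrals -/

lemma poly_int (c : ℝ) (k : ℕ) :
    ∫ s in (0:ℝ)..c, (c - s) ^ k = c ^ (k + 1) / (k + 1) := by
  have := intervalIntegral.integral_comp_sub_left (a := 0) (b := c) (fun x => x ^ k) c
  simp only [sub_zero, sub_self] at this
  rw [this, integral_pow]
  simp

lemma outer_int (n : ℕ) :
    ∫ s in (0:ℝ)..(2 * Real.pi), 2 * s * ((2 * Real.pi - s) / (2 * Real.pi)) ^ n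
      = 8 * Real.pi ^ 2 / ((n + 1) * (n + 2)) := by
  have hπ : (0:ℝ) < 2 * Real.pi := by positivity
  have hcongr : ∀ s : ℝ, 2 * s * ((2 * Real.pi - s) / (2 * Real.pi)) ^ n
      = ((2 * Real.pi)⁻¹) ^ n * ((2 * (2 * Real.pi)) * (2 * Real.pi - s) ^ n)
        - ((2 * Real.pi)⁻¹) ^ n * (2 * (2 * Real.pi - s) ^ (n + 1)) := by
    intro s
    rw [div_pow]
    have h2 : (2 * Real.pi - s) ^ (n+1) = (2 * Real.pi - s) ^ n * (2 * Real.pi - s) :=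
      pow_succ _ _
    rw [div_eq_mul_inv, ← inv_pow]
    ring
  rw [intervalIntegral.integral_congr
    (g := fun s => ((2 * Real.pi)⁻¹) ^ n * ((2 * (2 * Real.pi)) * (2 * Real.pi - s) ^ n)
        - ((2 * Real.pi)⁻¹) ^ n * (2 * (2 * Real.pi - s) ^ (n + 1))) (fun s _ => hcongr s)]
  have hint : ∀ k : ℕ,
      IntervalIntegrable (fun s : ℝ => (2 * Real.pi - s) ^ k) volume 0 (2 * Real.pi) :=
    fun k => ((continuous_const.sub continuous_id).pow k).intervalIntegrable _ _
  rw [intervalIntegral.integral_sub, intervalIntegral.integral_const_mul,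
    intervalIntegral.integral_const_mul, intervalIntegral.integral_const_mul,
    intervalIntegral.integral_const_mul, poly_int, poly_int]
  · have h1 : ((n:ℝ) + 1) ≠ 0 := by positivity
    have h2 : ((n:ℝ) + 2) ≠ 0 := by positivity
    have h3 : (2 * Real.pi) ≠ 0 := hπ.ne'
    have hpow : (2 * Real.pi) ^ (n + 1 + 1) = (2 * Real.pi) ^ n * (2*Real.pi) * (2*Real.pi) := by
      ring
    have hpow2 : (2 * Real.pi) ^ (n + 1) = (2 * Real.pi) ^ n * (2*Real.pi) := by ring
    push_cast
    rw [hpow, hpow2]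
    have hπ0 : Real.pi ≠ 0 := Real.pi_pos.ne'
    simp only [inv_pow]
    field_simp
    ring
  · exact (((hint n).const_mul _).const_mul _)
  · exact (((hint (n+1)).const_mul _).const_mul _)

lemma abs_int (a b c L : ℝ) (ha : a ≤ c) (hb : c ≤ b) :
    ∫ θ in a..b, L * |θ - c| = L / 2 * ((c - a) ^ 2 + (b - c) ^ 2) := by
  rw [intervalIntegral.integral_const_mul]
  have hi : ∀ p q : ℝ, IntervalIntegrable (fun θ => |θ - c|) volume p q :=
    fun p q => ((continuous_id.sub continuous_const).abs).intervalIntegrable _ _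
  rw [← intervalIntegral.integral_add_adjacent_intervals (b := c) (hi a c) (hi c b)]
  have h1 : ∫ θ in a..c, |θ - c| = (c - a) ^ 2 / 2 := by
    rw [intervalIntegral.integral_congr (g := fun θ => c - θ)]
    · have h := intervalIntegral.integral_comp_sub_left (a := a) (b := c) (fun x => x) c
      rw [h, sub_self, integral_id]
      ring
    · intro θ hθ
      rw [Set.uIcc_of_le ha] at hθ
      show |θ - c| = c - θ
      rw [abs_of_nonpos (sub_nonpos.mpr hθ.2)]
      ring
  have h2 : ∫ θ in c..b, |θ - c| = (b - c) ^ 2 / 2 := by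
    rw [intervalIntegral.integral_congr (g := fun θ => θ - c)]
    · have h := intervalIntegral.integral_comp_sub_right (a := c) (b := b) (fun x => x) c
      rw [h, sub_self, integral_id]
      ring
    · intro θ hθ
      rw [Set.uIcc_of_le hb] at hθ
      show |θ - c| = θ - c
      exact abs_of_nonneg (sub_nonneg.mpr hθ.1)
  rw [h1, h2]; ring

/- ### Expectation of squared extremes -/

lemma exp_sq (n : ℕ) (q : (Fin n → ℝ) → ℝ) (hq : Measurable q)
    (hrange : ∀ s ∈ Set.Ioc (0:ℝ) (2 * Real.pi),
      Pn n {u | s < q u} = ENNReal.ofReal ((2 * Real.pi - s) / (2 * Real.pi)) ^ n)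
    (hae : ∀ᵐ u ∂(Pn n), q u ∈ Set.Icc (0:ℝ) (2 * Real.pi)) :
    ∫ u, (q u) ^ 2 ∂(Pn n) = 8 * Real.pi ^ 2 / (((n:ℝ) + 1) * ((n:ℝ) + 2)) := by
  have hπ : (0:ℝ) < 2 * Real.pi := by positivity
  set ν : Measure ℝ := volume.restrict (Set.Ioc (0:ℝ) (2 * Real.pi)) with hν
  have hFmeas : Measurable (fun p : (Fin n → ℝ) × ℝ => if p.2 < q p.1 then 2 * p.2 else 0) :=
    Measurable.ite (measurableSet_lt measurable_snd (hq.comp measurable_fst))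
      (measurable_const.mul measurable_snd) measurable_const
  have step1 : ∀ c ∈ Set.Icc (0:ℝ) (2 * Real.pi),
      ∫ s, (if s < c then 2 * s else 0) ∂ν = c ^ 2 := by
    intro c hc
    have heq : (fun s : ℝ => if s < c then 2 * s else 0)
        = (Set.Iio c).indicator (fun s => 2 * s) := by
      funext s; simp [Set.indicator_apply, Set.mem_Iio]
    rw [heq, integral_indicator measurableSet_Iio, hν, Measure.restrict_restrict measurableSet_Iio]
    have hset : Set.Iio c ∩ Set.Ioc 0 (2 * Real.pi) = Set.Ioo 0 c := by
      ext x
      simp only [Set.mem_inter_iff, Set.mem_Iio, Set.mem_Ioc, Set.mem_Ioo]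
      constructor
      · rintro ⟨h1, h2, _⟩; exact ⟨h2, h1⟩
      · rintro ⟨h1, h2⟩; exact ⟨h2, h1, (h2.le.trans hc.2)⟩
    rw [hset, ← integral_Ioc_eq_integral_Ioo, ← intervalIntegral.integral_of_le hc.1,
      intervalIntegral.integral_const_mul, integral_id]
    ring
  have hprod_ae : ∀ᵐ p : (Fin n → ℝ) × ℝ ∂((Pn n).prod ν),
      p.2 ∈ Set.Ioc (0:ℝ) (2 * Real.pi) := by
    rw [ae_iff]
    refine measure_mono_null (fun p hp => ?_) (?_ : ((Pn n).prod ν)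
      (Set.univ ×ˢ (Set.Ioc (0:ℝ) (2 * Real.pi))ᶜ) = 0)
    · exact ⟨Set.mem_univ _, hp⟩
    · rw [Measure.prod_prod]
      have : ν (Set.Ioc (0:ℝ) (2 * Real.pi))ᶜ = 0 := by
        rw [hν, Measure.restrict_apply measurableSet_Ioc.compl, Set.compl_inter_self,
          measure_empty]
      rw [this, mul_zero]
  have hint : Integrable (fun p : (Fin n → ℝ) × ℝ => if p.2 < q p.1 then 2 * p.2 else 0)
      ((Pn n).prod ν) := by
    refine (integrable_const (4 * Real.pi)).mono' hFmeas.aestronglyMeasurable ?_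
    filter_upwards [hprod_ae] with p hp
    rw [Real.norm_eq_abs]
    split_ifs
    · rw [abs_of_nonneg (by linarith [hp.1])]
      linarith [hp.2]
    · rw [abs_zero]; positivity
  have step3 : ∫ u, (q u) ^ 2 ∂(Pn n)
      = ∫ u, (∫ s, (if s < q u then 2 * s else 0) ∂ν) ∂(Pn n) := by
    refine integral_congr_ae ?_
    filter_upwards [hae] with u hu
    rw [step1 _ hu]
  rw [step3]
  rw [MeasureTheory.integral_integral_swap hint]
  have step5 : ∀ s ∈ Set.Ioc (0:ℝ) (2 * Real.pi),
      ∫ u, (if s < q u then 2 * s else 0) ∂(Pn n)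
        = 2 * s * ((2 * Real.pi - s) / (2 * Real.pi)) ^ n := by
    intro s hs
    have heq : (fun u => if s < q u then 2 * s else 0)
        = Set.indicator {u : Fin n → ℝ | s < q u} (fun _ => 2 * s) := by
      funext u; simp [Set.indicator_apply, Set.mem_setOf_eq]
    rw [heq, integral_indicator_const (2 * s) (measurableSet_lt measurable_const hq),
      measureReal_def, hrange s hs, smul_eq_mul, mul_comm, ENNReal.toReal_pow,
      ENNReal.toReal_ofReal (div_nonneg (by linarith [hs.2]) hπ.le)]
  rw [hν, setIntegral_congr_fun measurableSet_Ioc (fun s hs => step5 s hs),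
    ← intervalIntegral.integral_of_le hπ.le, outer_int]

/- ### The extremes -/

lemma inf_measurable (n : ℕ) : Measurable (fun u : Fin n → ℝ => ⨅ i, u i) :=
  Measurable.iInf (fun i => measurable_pi_apply i)

lemma sup_measurable (n : ℕ) : Measurable (fun u : Fin n → ℝ => ⨆ i, u i) :=
  Measurable.iSup (fun i => measurable_pi_apply i)

lemma inf_attained {n : ℕ} [Nonempty (Fin n)] (u : Fin n → ℝ) : ∃ i, u i = ⨅ j, u j := by
  have h := (Set.range_nonempty u).csInf_mem (Set.finite_range u)
  obtain ⟨i, hi⟩ := h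
  exact ⟨i, hi⟩

lemma sup_attained {n : ℕ} [Nonempty (Fin n)] (u : Fin n → ℝ) : ∃ i, u i = ⨆ j, u j := by
  have h := (Set.range_nonempty u).csSup_mem (Set.finite_range u)
  obtain ⟨i, hi⟩ := h
  exact ⟨i, hi⟩

lemma hrange_inf {n : ℕ} (hn : 0 < n) {s : ℝ} (hs : s ∈ Set.Ioc (0:ℝ) (2 * Real.pi)) :
    Pn n {u | s < ⨅ i, u i} = ENNReal.ofReal ((2 * Real.pi - s) / (2 * Real.pi)) ^ n := by
  haveI : Nonempty (Fin n) := ⟨⟨0, hn⟩⟩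
  have hset : {u : Fin n → ℝ | s < ⨅ i, u i} = Set.pi Set.univ (fun _ => Set.Ioi s) := by
    ext u
    simp only [Set.mem_setOf_eq, Set.mem_pi, Set.mem_univ, true_implies, Set.mem_Ioi]
    constructor
    · intro h i
      exact h.trans_le (ciInf_le (Set.finite_range u).bddBelow i)
    · intro h
      obtain ⟨i, hi⟩ := inf_attained u
      rw [← hi]
      exact h i
  rw [hset, Pn, Measure.pi_pi]
  simp [unif_Ioi hs, Finset.prod_const]

lemma hrange_sup {n : ℕ} (hn : 0 < n) {s : ℝ} (hs : s ∈ Set.Ioc (0:ℝ) (2 * Real.pi)) :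
    Pn n {u | s < 2 * Real.pi - ⨆ i, u i}
      = ENNReal.ofReal ((2 * Real.pi - s) / (2 * Real.pi)) ^ n := by
  haveI : Nonempty (Fin n) := ⟨⟨0, hn⟩⟩
  have hset : {u : Fin n → ℝ | s < 2 * Real.pi - ⨆ i, u i}
      = Set.pi Set.univ (fun _ => Set.Iio (2 * Real.pi - s)) := by
    ext u
    simp only [Set.mem_setOf_eq, Set.mem_pi, Set.mem_univ, true_implies, Set.mem_Iio]
    constructor
    · intro h i
      have : u i ≤ ⨆ j, u j := le_ciSup (Set.finite_range u).bddAbove i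
      linarith
    · intro h
      obtain ⟨i, hi⟩ := sup_attained u
      have := h i
      rw [hi] at this
      linarith
  rw [hset, Pn, Measure.pi_pi]
  simp [unif_Iio hs, Finset.prod_const]

lemma inf_mem {n : ℕ} (hn : 0 < n) :
    ∀ᵐ u ∂(Pn n), (⨅ i, u i) ∈ Set.Icc (0:ℝ) (2 * Real.pi) := by
  haveI : Nonempty (Fin n) := ⟨⟨0, hn⟩⟩
  filter_upwards [ae_mem_Icc n] with u hu
  constructor
  · exact le_ciInf fun i => (hu i).1
  · exact (ciInf_le (Set.finite_range u).bddBelow ⟨0, hn⟩).trans (hu ⟨0, hn⟩).2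

lemma sup_mem {n : ℕ} (hn : 0 < n) :
    ∀ᵐ u ∂(Pn n), (2 * Real.pi - ⨆ i, u i) ∈ Set.Icc (0:ℝ) (2 * Real.pi) := by
  haveI : Nonempty (Fin n) := ⟨⟨0, hn⟩⟩
  filter_upwards [ae_mem_Icc n] with u hu
  have h1 : (⨆ i, u i) ≤ 2 * Real.pi := ciSup_le fun i => (hu i).2
  have h2 : (0:ℝ) ≤ ⨆ i, u i :=
    (hu ⟨0, hn⟩).1.trans (le_ciSup (Set.finite_range u).bddAbove ⟨0, hn⟩)
  constructor <;> [linarith; linarith]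

/- ### Main theorem -/

/-- Remainder bound in dimension 2: with `M = κ e^κ / I₀(κ)`,
`E[∫ |R₀(θ)| dθ] ≤ M π² / ((n+1)(n+2))`; in particular it is `O(1/n²)` as `n → ∞`. -/
theorem remainder_bound_dim2 (κ : ℝ) (hκ : 0 ≤ κ) (θ₀ : ℝ)
    (hθ₀ : θ₀ ∈ Set.Icc (-Real.pi) Real.pi) :
    (∀ n : ℕ, 0 < n →
      remainderInt κ θ₀ n
        ≤ κ * Real.exp κ / besselI0 κ * Real.pi ^ 2 / (((n : ℝ) + 1) * ((n : ℝ) + 2)))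
    ∧ (fun n : ℕ => remainderInt κ θ₀ n) =O[atTop] fun n : ℕ => 1 / (n : ℝ) ^ 2 := by
  have hπ := Real.pi_pos
  have hI := besselI0_pos κ
  have hD := denom_pos κ
  set L : ℝ := κ * Real.exp κ / (2 * Real.pi * besselI0 κ) with hL
  have hL0 : 0 ≤ L := by positivity
  set C0 : ℝ := Real.exp κ / Real.pi / besselI0 κ with hC0
  have hC00 : 0 ≤ C0 := by positivity
  -- notation
  have key : ∀ n : ℕ, 0 < n →
      remainderInt κ θ₀ n
        ≤ κ * Real.exp κ / besselI0 κ * Real.pi ^ 2 / (((n : ℝ) + 1) * ((n : ℝ) + 2)) := by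
    intro n hn
    haveI : Nonempty (Fin n) := ⟨⟨0, hn⟩⟩
    set a : (Fin n → ℝ) → ℝ := fun u => θ₀ + ((⨆ i, u i) - 2 * Real.pi) / 2 with ha
    set b : (Fin n → ℝ) → ℝ := fun u => θ₀ + (⨅ i, u i) / 2 with hb
    set g : (Fin n → ℝ) → ℝ := fun u => ∫ θ in a u..b u, |fvM κ θ - fvM κ θ₀| with hg
    have hrem : remainderInt κ θ₀ n = ∫ u, g u ∂(Pn n) := rfl
    have hma : Measurable a :=
      measurable_const.add (((sup_measurable n).sub measurable_const).div_const 2)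
    have hmb : Measurable b :=
      measurable_const.add ((inf_measurable n).div_const 2)
    have hFcont : Continuous (fun θ => |fvM κ θ - fvM κ θ₀|) :=
      ((fvM_continuous κ).sub continuous_const).abs
    -- measurability of g
    have hGcont : Continuous (fun x => ∫ θ in (0:ℝ)..x, |fvM κ θ - fvM κ θ₀|) :=
      intervalIntegral.continuous_primitive (fun p q => hFcont.intervalIntegrable p q) 0
    have hgm : Measurable g := by
      have : g = fun u => (∫ θ in (0:ℝ)..(b u), |fvM κ θ - fvM κ θ₀|)
          - ∫ θ in (0:ℝ)..(a u), |fvM κ θ - fvM κ θ₀| := by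
        funext u
        rw [hg]
        exact (intervalIntegral.integral_interval_sub_left
          (hFcont.intervalIntegrable _ _) (hFcont.intervalIntegrable _ _)).symm
      rw [this]
      exact (hGcont.measurable.comp hmb).sub (hGcont.measurable.comp hma)
    -- a.e. facts
    have haeab : ∀ᵐ u ∂(Pn n), a u ≤ θ₀ ∧ θ₀ ≤ b u ∧ b u - a u ≤ Real.pi := by
      filter_upwards [ae_mem_Icc n] with u hu
      have hsup_le : (⨆ i, u i) ≤ 2 * Real.pi := ciSup_le fun i => (hu i).2
      have hinf_ge : (0:ℝ) ≤ ⨅ i, u i := le_ciInf fun i => (hu i).1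
      have hle : (⨅ i, u i) ≤ ⨆ i, u i :=
        (ciInf_le (Set.finite_range u).bddBelow ⟨0, hn⟩).trans
          (le_ciSup (Set.finite_range u).bddAbove ⟨0, hn⟩)
      refine ⟨by rw [ha]; dsimp only; linarith, by rw [hb]; dsimp only; linarith, ?_⟩
      rw [ha, hb]; dsimp only; linarith
    -- integrability of g
    have hgint : Integrable g (Pn n) := by
      refine (integrable_const (C0 * Real.pi)).mono' hgm.aestronglyMeasurable ?_
      filter_upwards [haeab] with u hu
      have h1 : ‖g u‖ ≤ C0 * |b u - a u| := by
        rw [hg]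
        exact intervalIntegral.norm_integral_le_of_norm_le_const
          (fun x _ => by rw [Real.norm_eq_abs, abs_abs]; exact abs_fvM_sub_le hκ x θ₀)
      refine h1.trans ?_
      have : |b u - a u| ≤ Real.pi := by
        rw [abs_of_nonneg (by linarith [hu.1, hu.2.1])]
        exact hu.2.2
      exact mul_le_mul_of_nonneg_left this hC00
    -- dominating function
    set h1f : (Fin n → ℝ) → ℝ := fun u => (⨅ i, u i) ^ 2 with hh1
    set h2f : (Fin n → ℝ) → ℝ := fun u => (2 * Real.pi - ⨆ i, u i) ^ 2 with hh2
    have hint1 : Integrable h1f (Pn n) := by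
      refine (integrable_const ((2 * Real.pi) ^ 2)).mono'
        ((inf_measurable n).pow_const 2).aestronglyMeasurable ?_
      filter_upwards [inf_mem hn] with u hu
      rw [Real.norm_eq_abs, abs_of_nonneg (sq_nonneg _)]
      exact pow_le_pow_left₀ hu.1 hu.2 2
    have hint2 : Integrable h2f (Pn n) := by
      refine (integrable_const ((2 * Real.pi) ^ 2)).mono'
        (((measurable_const.sub (sup_measurable n))).pow_const 2).aestronglyMeasurable ?_
      filter_upwards [sup_mem hn] with u hu
      rw [Real.norm_eq_abs, abs_of_nonneg (sq_nonneg _)]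
      exact pow_le_pow_left₀ hu.1 hu.2 2
    -- pointwise comparison
    have hgh : g ≤ᵐ[Pn n] fun u => L / 8 * h1f u + L / 8 * h2f u := by
      filter_upwards [haeab] with u hu
      have hab : a u ≤ b u := by linarith [hu.1, hu.2.1]
      have step : g u ≤ ∫ θ in a u..b u, L * |θ - θ₀| := by
        rw [hg]
        refine intervalIntegral.integral_mono_on hab (hFcont.intervalIntegrable _ _)
          ((continuous_const.mul (continuous_id.sub continuous_const).abs).intervalIntegrable _ _)
          (fun θ _ => fvM_lipschitz hκ θ θ₀)
      refine step.trans ?_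
      rw [abs_int _ _ _ _ hu.1 hu.2.1]
      have e1 : θ₀ - a u = (2 * Real.pi - ⨆ i, u i) / 2 := by rw [ha]; dsimp only; ring
      have e2 : b u - θ₀ = (⨅ i, u i) / 2 := by rw [hb]; dsimp only; ring
      rw [e1, e2, hh1, hh2]
      dsimp only
      ring_nf
      nlinarith [sq_nonneg (⨅ i, u i), sq_nonneg (2 * Real.pi - ⨆ i, u i)]
    -- put it together
    have hle : remainderInt κ θ₀ n
        ≤ L / 8 * (8 * Real.pi ^ 2 / (((n:ℝ) + 1) * ((n:ℝ) + 2)))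
          + L / 8 * (8 * Real.pi ^ 2 / (((n:ℝ) + 1) * ((n:ℝ) + 2))) := by
      rw [hrem]
      calc ∫ u, g u ∂(Pn n) ≤ ∫ u, (L / 8 * h1f u + L / 8 * h2f u) ∂(Pn n) :=
            integral_mono_ae hgint ((hint1.const_mul _).add (hint2.const_mul _)) hgh
        _ = L / 8 * ∫ u, h1f u ∂(Pn n) + L / 8 * ∫ u, h2f u ∂(Pn n) := by
            rw [integral_add (hint1.const_mul _) (hint2.const_mul _),
              integral_const_mul, integral_const_mul]
        _ = L / 8 * (8 * Real.pi ^ 2 / (((n:ℝ) + 1) * ((n:ℝ) + 2)))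
              + L / 8 * (8 * Real.pi ^ 2 / (((n:ℝ) + 1) * ((n:ℝ) + 2))) := by
            rw [exp_sq n _ (inf_measurable n) (fun s hs => hrange_inf hn hs) (inf_mem hn),
              exp_sq n (fun u => 2 * Real.pi - ⨆ i, u i) (measurable_const.sub (sup_measurable n))
                (fun s hs => hrange_sup hn hs) (sup_mem hn)]
    refine hle.trans ?_
    have hDen : (0:ℝ) < ((n:ℝ) + 1) * ((n:ℝ) + 2) := by positivity
    have hsimp : L / 8 * (8 * Real.pi ^ 2 / (((n:ℝ) + 1) * ((n:ℝ) + 2)))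
          + L / 8 * (8 * Real.pi ^ 2 / (((n:ℝ) + 1) * ((n:ℝ) + 2)))
        = (κ * Real.exp κ / besselI0 κ * Real.pi) / (((n:ℝ) + 1) * ((n:ℝ) + 2)) := by
      rw [hL]
      field_simp
      ring
    rw [hsimp]
    have hX : 0 ≤ κ * Real.exp κ / besselI0 κ := by positivity
    have hππ : Real.pi ≤ Real.pi ^ 2 := by nlinarith [Real.pi_gt_three]
    gcongr
  refine ⟨key, ?_⟩
  -- nonnegativity
  have hnonneg : ∀ n : ℕ, 0 < n → 0 ≤ remainderInt κ θ₀ n := by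
    intro n hn
    haveI : Nonempty (Fin n) := ⟨⟨0, hn⟩⟩
    apply integral_nonneg_of_ae
    filter_upwards [ae_mem_Icc n] with u hu
    have hsup_le : (⨆ i, u i) ≤ 2 * Real.pi := ciSup_le fun i => (hu i).2
    have hinf_ge : (0:ℝ) ≤ ⨅ i, u i := le_ciInf fun i => (hu i).1
    refine intervalIntegral.integral_nonneg (by linarith) (fun x _ => abs_nonneg _)
  rw [isBigO_iff]
  refine ⟨κ * Real.exp κ / besselI0 κ * Real.pi ^ 2, ?_⟩
  rw [eventually_atTop]
  refine ⟨1, fun n hn => ?_⟩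
  have hn' : 0 < n := hn
  have hnR : (1:ℝ) ≤ (n:ℝ) := by exact_mod_cast hn
  have hden : (0:ℝ) < ((n:ℝ) + 1) * ((n:ℝ) + 2) := by positivity
  have hCge : 0 ≤ κ * Real.exp κ / besselI0 κ * Real.pi ^ 2 := by positivity
  rw [Real.norm_eq_abs, abs_of_nonneg (hnonneg n hn'), Real.norm_eq_abs]
  have h2 : |1 / (n:ℝ) ^ 2| = 1 / (n:ℝ) ^ 2 := abs_of_nonneg (by positivity)
  rw [h2]
  refine (key n hn').trans ?_
  rw [mul_one_div]
  have h3 : (n:ℝ) ^ 2 ≤ ((n:ℝ) + 1) * ((n:ℝ) + 2) := by nlinarith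
  have h4 : (0:ℝ) < (n:ℝ) ^ 2 := by nlinarith
  gcongr

end
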